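/- For every p ≥ 1, β > 0, every finite Λ ⊂ ℤ² with zero boundary condition, every contour γ with Λ_γ ⊆ Λ and every integer h ≥ 1, the p-SOS measure with floor at 0 satisfies barπ^{p,0}_Λ(C_{γ,h} ∩ {η_x ≥ 1 for all x ∈ Λ_γ}) ≤ exp(−β|γ|). -/

import Mathlib

open scoped BigOperators Classical

noncomputable section

namespace PSOS

/-- Sites of the square lattice `ℤ²`. -/
abbrev Site : Type := ℤ × ℤ

/-- The nearest-neighbour edges incident to `x`, each written in its normalized
(right/up oriented) form, so that every unordered pair appears in a unique way. -/
def edgesAt (x : Site) : Finset (Site × Site) :=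
  {(x, (x.1 + 1, x.2)), (x, (x.1, x.2 + 1)),
   ((x.1 - 1, x.2), x), ((x.1, x.2 - 1), x)}

/-- Nearest-neighbour edges of `ℤ²` with at least one endpoint in `Λ`,
each unordered pair appearing exactly once. -/
def edges (Λ : Finset Site) : Finset (Site × Site) := Λ.biUnion edgesAt

/-- Extension `ξ` of a configuration `η : Λ → ℤ` by the boundary condition `φ` off `Λ`. -/
def extend (Λ : Finset Site) (φ : Site → ℤ) (η : Λ → ℤ) : Site → ℤ :=
  fun x => if h : x ∈ Λ then η ⟨x, h⟩ else φ x

/-- The `p`-SOS Hamiltonian `H^{p,φ}_Λ` on `Λ` with boundary condition `φ`. -/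
def ham (p : ℝ) (Λ : Finset Site) (φ : Site → ℤ) (η : Λ → ℤ) : ℝ :=
  ∑ e ∈ edges Λ, (|extend Λ φ η e.1 - extend Λ φ η e.2| : ℝ) ^ p

/-- Boltzmann weight `exp(-β H^{p,φ}_Λ(η))`. -/
def weight (p β : ℝ) (Λ : Finset Site) (φ : Site → ℤ) (η : Λ → ℤ) : ℝ :=
  Real.exp (-β * ham p Λ φ η)

/-- Finite-volume Gibbs probability `hatπ^{p,φ}_Λ(A)` of an event `A ⊆ ℤ^Λ`. -/
def gibbs (p β : ℝ) (Λ : Finset Site) (φ : Site → ℤ) (A : Set (Λ → ℤ)) : ℝ :=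
  (∑' η : A, weight p β Λ φ η) / (∑' η : (Λ → ℤ), weight p β Λ φ η)

/-- Gibbs expectation of an observable under `hatπ^{p,φ}_Λ`. -/
def gibbsExp (p β : ℝ) (Λ : Finset Site) (φ : Site → ℤ) (f : (Λ → ℤ) → ℝ) : ℝ :=
  (∑' η : (Λ → ℤ), f η * weight p β Λ φ η) / (∑' η : (Λ → ℤ), weight p β Λ φ η)

/-- The floor event `{η : η_x ≥ 0 for all x ∈ Λ}`. -/
def floorSet (Λ : Finset Site) : Set (Λ → ℤ) := {η | ∀ x, 0 ≤ η x}

/-- The event `{η : 0 ≤ η_x ≤ n for all x ∈ Λ}` (floor at `0`, ceiling at `n`). -/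
def boxSet (Λ : Finset Site) (n : ℕ) : Set (Λ → ℤ) :=
  {η | ∀ x, 0 ≤ η x ∧ η x ≤ (n : ℤ)}

/-- `barπ^{p,0}_Λ`: the Gibbs measure with zero boundary condition conditioned
on the floor event. -/
def barGibbs (p β : ℝ) (Λ : Finset Site) (A : Set (Λ → ℤ)) : ℝ :=
  gibbs p β Λ 0 (A ∩ floorSet Λ) / gibbs p β Λ 0 (floorSet Λ)

/-- `π^{p,0}_Λ`: the Gibbs measure with zero boundary condition conditioned on
having floor at `0` and ceiling at `n`. -/
def ceilGibbs (p β : ℝ) (Λ : Finset Site) (n : ℕ) (A : Set (Λ → ℤ)) : ℝ :=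
  gibbs p β Λ 0 (A ∩ boxSet Λ n) / gibbs p β Λ 0 (boxSet Λ n)

/-- The nearest-neighbour graph on `ℤ²`. -/
def nbrGraph : SimpleGraph Site where
  Adj x y := (x.1 - y.1).natAbs + (x.2 - y.2).natAbs = 1
  symm := ⟨by intro x y hxy; (try simp only at hxy ⊢); omega⟩
  loopless := ⟨by intro x h; (try simp only at h ⊢); omega⟩

/-- The four nearest neighbours of a site. -/
def nbrs (x : Site) : Finset Site :=
  {(x.1 + 1, x.2), (x.1 - 1, x.2), (x.1, x.2 + 1), (x.1, x.2 - 1)}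

/-- A contour `γ` of the dual lattice `(ℤ²)*`, identified with the finite region
`Λ_γ ⊆ ℤ²` of sites it encloses: the region is nonempty and connected with
connected complement, so that its edge boundary is a single closed dual circuit
(consistently with the standard linking rule at dual vertices). -/
structure Contour where
  interior : Finset Site
  nonempty : interior.Nonempty
  conn : (nbrGraph.induce (interior : Set Site)).Connected
  coconn : (nbrGraph.induce ((interior : Set Site)ᶜ)).Connected

/-- The nearest-neighbour edges crossing the boundary of `S`, oriented from
inside to outside; these correspond to the bonds of the dual circuit bounding `S`. -/
def bdryEdges (S : Finset Site) : Finset (Site × Site) :=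
  S.biUnion fun x => ((nbrs x).filter fun y => y ∉ S).image fun y => (x, y)

/-- `|γ|`: the number of bonds of the contour `γ`. -/
def Contour.len (γ : Contour) : ℕ := (bdryEdges γ.interior).card

/-- `∂⁺_γ`: sites of the interior adjacent to the exterior. -/
def innerBdry (S : Finset Site) : Finset Site :=
  S.filter fun x => ∃ y ∈ nbrs x, y ∉ S

/-- `∂⁻_γ`: sites of the exterior adjacent to the interior. -/
def outerBdry (S : Finset Site) : Finset Site :=
  (S.biUnion nbrs).filter fun y => y ∉ S

/-- The event `C_{γ,h}` that `γ` is an `h`-contour: the extended configuration `ξ`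
is at least `h` on `∂⁺_γ` and at most `h - 1` on `∂⁻_γ`. -/
def contourEvent (Λ : Finset Site) (φ : Site → ℤ) (γ : Contour) (h : ℤ) :
    Set (Λ → ℤ) :=
  {η | (∀ x ∈ innerBdry γ.interior, h ≤ extend Λ φ η x) ∧
       (∀ y ∈ outerBdry γ.interior, extend Λ φ η y ≤ h - 1)}

/-- The map `T_γ` lowering the configuration by `1` inside the contour `γ`. -/
def lower (Λ : Finset Site) (γ : Contour) (η : Λ → ℤ) : Λ → ℤ :=
  fun x => if (x : Site) ∈ γ.interior then η x - 1 else η x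

/-- An event is increasing if it is upward closed for the pointwise order. -/
def IncrEvent (Λ : Finset Site) (E : Set (Λ → ℤ)) : Prop :=
  ∀ η η' : Λ → ℤ, (∀ x, η x ≤ η' x) → η ∈ E → η' ∈ E

/-! Peierls argument: lowering `η` by one inside `γ` is injective, keeps a configuration that is
at least `1` on `Λ_γ` above the floor, and on `C_{γ,h}` lowers the energy by at least `|γ|`, since
each bond crossing `γ` joins heights `u ≥ h > v` and `(u - v - 1)^p + 1 ≤ (u - v)^p` for `p ≥ 1`.
Hence the weight of the event is at most `exp(-β|γ|)` times the weight of its image, which lies in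
the floor event. -/

open Set

lemma tsum_mul_le_tsum_of_mapsTo {α : Type*} {w : α → ℝ} (hw : ∀ x, 0 ≤ w x) (hs : Summable w)
    {A B : Set α} {T : α → α} (hT : MapsTo T A B) (hinj : InjOn T A) {c : ℝ}
    (hc : ∀ x ∈ A, c * w x ≤ w (T x)) :
    c * ∑' x : A, w x ≤ ∑' y : B, w y := by
  rw [← tsum_mul_left]
  exact ((hs.subtype A).mul_left c).tsum_le_tsum_of_inj (hT.restrict T A B)
    (hT.restrict_inj.2 hinj) (fun y _ => hw y) (fun x => hc x x.2) (hs.subtype B)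

lemma div_div_div_le_of_le_mul {a b c Z : ℝ} (hb : 0 ≤ b) (hc : 0 ≤ c) (h : a ≤ c * b) :
    a / Z / (b / Z) ≤ c := by
  rcases eq_or_ne Z 0 with rfl | hZ
  · simpa using hc
  · rw [div_div_div_cancel_right₀ hZ]
    exact div_le_of_le_mul₀ hb hc h

theorem barGibbs_le_exp_of_injOn {p β k : ℝ} (hβ : 0 ≤ β) {Λ : Finset Site}
    {E : Set (Λ → ℤ)} {T : (Λ → ℤ) → Λ → ℤ}
    (hT : MapsTo T (E ∩ floorSet Λ) (floorSet Λ)) (hinj : InjOn T (E ∩ floorSet Λ))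
    (hham : ∀ η ∈ E ∩ floorSet Λ, ham p Λ 0 (T η) + k ≤ ham p Λ 0 η) :
    barGibbs p β Λ E ≤ Real.exp (-β * k) := by
  have hw : ∀ η, 0 ≤ weight p β Λ 0 η := fun η => (Real.exp_pos _).le
  by_cases hs : Summable (weight p β Λ 0)
  · refine div_div_div_le_of_le_mul (tsum_nonneg fun η => hw η) (Real.exp_pos _).le ?_
    have hcomp := tsum_mul_le_tsum_of_mapsTo hw hs hT hinj (c := Real.exp (β * k)) fun η hη => by
      rw [weight, weight, ← Real.exp_add, Real.exp_le_exp]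
      nlinarith [hham η hη]
    calc ∑' η : ↥(E ∩ floorSet Λ), weight p β Λ 0 η
        = Real.exp (-β * k) * (Real.exp (β * k) * ∑' η : ↥(E ∩ floorSet Λ), weight p β Λ 0 η) := by
          rw [← mul_assoc, ← Real.exp_add, neg_mul, neg_add_cancel, Real.exp_zero, one_mul]
      _ ≤ _ := by gcongr
  · simp [barGibbs, gibbs, tsum_eq_zero_of_not_summable hs, (Real.exp_pos _).le]

lemma mem_nbrs {x y : Site} :
    y ∈ nbrs x ↔ y = (x.1 + 1, x.2) ∨ y = (x.1 - 1, x.2) ∨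
      y = (x.1, x.2 + 1) ∨ y = (x.1, x.2 - 1) := by
  simp [nbrs]

lemma nbrs_symm {x y : Site} (hy : y ∈ nbrs x) : x ∈ nbrs y := by
  rw [mem_nbrs] at hy ⊢
  rcases hy with rfl | rfl | rfl | rfl <;> simp

lemma mem_bdryEdges {S : Finset Site} {e : Site × Site} :
    e ∈ bdryEdges S ↔ e.1 ∈ S ∧ e.2 ∈ nbrs e.1 ∧ e.2 ∉ S := by
  obtain ⟨x, y⟩ := e
  simp only [bdryEdges, Finset.mem_biUnion, Finset.mem_image, Finset.mem_filter, Prod.mk.injEq]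
  constructor
  · rintro ⟨x, hx, y, ⟨hy, hyS⟩, rfl, rfl⟩
    exact ⟨hx, hy, hyS⟩
  · rintro ⟨hx, hy, hyS⟩
    exact ⟨x, hx, y, ⟨hy, hyS⟩, rfl, rfl⟩

lemma snd_mem_nbrs_fst_of_mem_edges {Λ : Finset Site} {e : Site × Site} (he : e ∈ edges Λ) :
    e.2 ∈ nbrs e.1 := by
  obtain ⟨x, -, hx⟩ := Finset.mem_biUnion.1 he
  simp only [edgesAt, Finset.mem_insert, Finset.mem_singleton] at hx
  rcases hx with rfl | rfl | rfl | rfl <;> simp [mem_nbrs]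

def Crosses (S : Finset Site) (e : Site × Site) : Prop :=
  Xor (e.1 ∈ S) (e.2 ∈ S)

def normEdge (e : Site × Site) : Site × Site :=
  if e.2 = (e.1.1 + 1, e.1.2) ∨ e.2 = (e.1.1, e.1.2 + 1) then e else e.swap

lemma normEdge_eq_self_or_swap (e : Site × Site) : normEdge e = e ∨ normEdge e = e.swap := by
  unfold normEdge
  split_ifs <;> simp

lemma normEdge_mem_edgesAt {x y : Site} (hy : y ∈ nbrs x) : normEdge (x, y) ∈ edgesAt x := by
  rw [mem_nbrs] at hy
  rcases hy with rfl | rfl | rfl | rfl <;> simp [normEdge, edgesAt, Prod.ext_iff] <;> omega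

lemma crosses_normEdge_of_mem_bdryEdges {S : Finset Site} {e : Site × Site}
    (he : e ∈ bdryEdges S) : Crosses S (normEdge e) := by
  obtain ⟨hin, -, hout⟩ := mem_bdryEdges.1 he
  rcases normEdge_eq_self_or_swap e with h | h <;> rw [h] <;> simp [Crosses, Xor, hin, hout]

lemma injOn_normEdge_bdryEdges (S : Finset Site) :
    InjOn normEdge (bdryEdges S : Set (Site × Site)) := by
  intro e he e' he' heq
  rw [Finset.mem_coe, mem_bdryEdges] at he he'
  rcases normEdge_eq_self_or_swap e with h | h <;>
    rcases normEdge_eq_self_or_swap e' with h' | h' <;> rw [h, h'] at heq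
  · exact heq
  · exact absurd (heq ▸ he.1 : e'.swap.1 ∈ S) he'.2.2
  · exact absurd (heq ▸ he'.1 : e.swap.1 ∈ S) he.2.2
  · exact Prod.swap_injective heq

lemma card_bdryEdges_le_card_crosses {S Λ : Finset Site} (hS : S ⊆ Λ) :
    (bdryEdges S).card ≤ ((edges Λ).filter (Crosses S)).card := by
  refine Finset.card_le_card_of_injOn normEdge (fun e he => ?_) (injOn_normEdge_bdryEdges S)
  obtain ⟨hin, hnbr, -⟩ := mem_bdryEdges.1 he
  refine Finset.mem_filter.2 ⟨Finset.mem_biUnion.2 ⟨e.1, hS hin, ?_⟩,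
    crosses_normEdge_of_mem_bdryEdges he⟩
  exact normEdge_mem_edgesAt hnbr

lemma extend_lower {Λ : Finset Site} {γ : Contour} (hγ : γ.interior ⊆ Λ) (η : Λ → ℤ)
    (x : Site) :
    extend Λ 0 (lower Λ γ η) x = extend Λ 0 η x - if x ∈ γ.interior then 1 else 0 := by
  by_cases hx : x ∈ Λ
  · simp only [extend, lower, hx, dif_pos]
    split_ifs <;> ring
  · simp [extend, hx, show x ∉ γ.interior from fun hxγ => hx (hγ hxγ)]

lemma rpow_abs_sub_one_sub_add_one_le {p : ℝ} (hp : 1 ≤ p) {a b : ℤ} (hab : b < a) :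
    |(a : ℝ) - 1 - b| ^ p + 1 ≤ |(a : ℝ) - b| ^ p := by
  have hab' : (b : ℝ) + 1 ≤ a := by exact_mod_cast hab
  have h := Real.add_rpow_le_rpow_add (a := (a : ℝ) - 1 - b) (b := 1) (by linarith) zero_le_one hp
  rw [Real.one_rpow, show (a : ℝ) - 1 - b + 1 = a - b by ring] at h
  rwa [abs_of_nonneg (by linarith : (0 : ℝ) ≤ a - 1 - b),
    abs_of_nonneg (by linarith : (0 : ℝ) ≤ a - b)]

lemma extend_lt_of_mem_contourEvent {Λ : Finset Site} {φ : Site → ℤ} {γ : Contour} {h : ℤ}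
    {η : Λ → ℤ} (hC : η ∈ contourEvent Λ φ γ h) {x y : Site} (hy : y ∈ nbrs x)
    (hx : x ∈ γ.interior) (hyγ : y ∉ γ.interior) : extend Λ φ η y < extend Λ φ η x := by
  have hin : x ∈ innerBdry γ.interior := Finset.mem_filter.2 ⟨hx, y, hy, hyγ⟩
  have hout : y ∈ outerBdry γ.interior :=
    Finset.mem_filter.2 ⟨Finset.mem_biUnion.2 ⟨x, hx, hy⟩, hyγ⟩
  linarith [hC.1 x hin, hC.2 y hout]

lemma bond_lower_add_le {p : ℝ} (hp : 1 ≤ p) {Λ : Finset Site} {γ : Contour}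
    (hγ : γ.interior ⊆ Λ) {h : ℤ} {η : Λ → ℤ} (hC : η ∈ contourEvent Λ 0 γ h)
    {e : Site × Site} (he : e.2 ∈ nbrs e.1) :
    |(extend Λ 0 (lower Λ γ η) e.1 : ℝ) - extend Λ 0 (lower Λ γ η) e.2| ^ p
        + (if Crosses γ.interior e then 1 else 0)
      ≤ |(extend Λ 0 η e.1 : ℝ) - extend Λ 0 η e.2| ^ p := by
  obtain ⟨x, y⟩ := e
  dsimp only at he ⊢
  rw [extend_lower hγ, extend_lower hγ]
  by_cases hx : x ∈ γ.interior <;> by_cases hy : y ∈ γ.interior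
  · simp [Crosses, hx, hy]
  · simpa [Crosses, hx, hy] using
      rpow_abs_sub_one_sub_add_one_le hp (extend_lt_of_mem_contourEvent hC he hx hy)
  · have hbond := rpow_abs_sub_one_sub_add_one_le hp
      (extend_lt_of_mem_contourEvent hC (nbrs_symm he) hy hx)
    rw [abs_sub_comm, abs_sub_comm (extend Λ 0 η y : ℝ)] at hbond
    simpa [Crosses, hx, hy, sub_add] using hbond
  · simp [Crosses, hx, hy]

theorem ham_lower_add_len_le {p : ℝ} (hp : 1 ≤ p) {Λ : Finset Site} {γ : Contour}
    (hγ : γ.interior ⊆ Λ) {h : ℤ} {η : Λ → ℤ} (hC : η ∈ contourEvent Λ 0 γ h) :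
    ham p Λ 0 (lower Λ γ η) + γ.len ≤ ham p Λ 0 η := by
  calc ham p Λ 0 (lower Λ γ η) + γ.len
      ≤ ham p Λ 0 (lower Λ γ η) + ((edges Λ).filter (Crosses γ.interior)).card := by
        gcongr
        exact card_bdryEdges_le_card_crosses hγ
    _ = ∑ e ∈ edges Λ,
          (|(extend Λ 0 (lower Λ γ η) e.1 : ℝ) - extend Λ 0 (lower Λ γ η) e.2| ^ p
            + if Crosses γ.interior e then 1 else 0) := by
        rw [Finset.sum_add_distrib, Finset.natCast_card_filter, ham]
    _ ≤ ham p Λ 0 η := Finset.sum_le_sum fun e he =>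
        bond_lower_add_le hp hγ hC (snd_mem_nbrs_fst_of_mem_edges he)

lemma lower_injective (Λ : Finset Site) (γ : Contour) : Function.Injective (lower Λ γ) := by
  intro η η' heq
  funext x
  have hx := congrFun heq x
  unfold lower at hx
  split_ifs at hx <;> omega

lemma lower_mem_floorSet {Λ : Finset Site} {γ : Contour} {η : Λ → ℤ} (hη : η ∈ floorSet Λ)
    (hpos : ∀ x : Λ, (x : Site) ∈ γ.interior → 1 ≤ η x) : lower Λ γ η ∈ floorSet Λ := by
  intro x
  unfold lower
  split_ifs with hx
  · linarith [hpos x hx]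
  · exact hη x

theorem statement_14_general (p β : ℝ) (hp : 1 ≤ p) (hβ : 0 < β)
    (Λ : Finset Site) (γ : Contour) (hγ : γ.interior ⊆ Λ) (h : ℤ) :
    barGibbs p β Λ
        (contourEvent Λ 0 γ h ∩
          {η : Λ → ℤ | ∀ x : Λ, (x : Site) ∈ γ.interior → 1 ≤ η x}) ≤
      Real.exp (-β * (γ.len : ℝ)) := by
  refine barGibbs_le_exp_of_injOn hβ.le ?_ (lower_injective Λ γ).injOn ?_
  · rintro η ⟨⟨-, hpos⟩, hη⟩
    exact lower_mem_floorSet hη hpos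
  · rintro η ⟨⟨hC, -⟩, -⟩
    exact ham_lower_add_len_le hp hγ hC

/-- Peierls bound with floor, positive interior: for `h ≥ 1`,
`barπ^{p,0}_Λ(C_{γ,h} ∩ {η_x ≥ 1 ∀ x ∈ Λ_γ}) ≤ exp(-β|γ|)`. -/
theorem statement_14 (p β : ℝ) (hp : 1 ≤ p) (hβ : 0 < β)
    (Λ : Finset Site) (γ : Contour) (hγ : γ.interior ⊆ Λ) (h : ℤ) (hh : 1 ≤ h) :
    barGibbs p β Λ
        (contourEvent Λ 0 γ h ∩
          {η : Λ → ℤ | ∀ x : Λ, (x : Site) ∈ γ.interior → 1 ≤ η x}) ≤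
      Real.exp (-β * (γ.len : ℝ)) :=
  statement_14_general p β hp hβ Λ γ hγ h

end PSOS
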